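/- Let h, f, g : ℝ → ℝ be functions and let s, t be real numbers with 0 ≤ s ≤ t, h(s) ≠ 0 and h(t) ≠ 0. Let E₁^{[s,t]} be the evolution algebra whose structure matrix is (h(t)/2) times the matrix with constant rows (c₁,c₁,c₁), (c₂,c₂,c₂), (c₃,c₃,c₃), where c₁ = 1/h(s) + f(s), c₂ = 1/h(s) − g(s), c₃ = g(s) − f(s). If one of the conditions holds: (1) g(s) = f(s) = 1/h(s); (2) g(s) = f(s) = −1/h(s); (3) g(s) = −f(s) = 1/h(s); then E₁^{[s,t]} is isomorphic to the evolution algebra E₄ whose structure matrix has rows (1,0,0), (0,0,0), (0,0,0). -/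

import Mathlib

/-!
In each of the three cases exactly one of `c₁, c₂, c₃` survives, equal to `2 / h s`, so the algebra
has a natural basis with `eᵢ² = k • (e₀ + e₁ + e₂)`, `k = h t / h s ≠ 0`, and all other products zero.
More generally, if `eᵢ² = v` with `vᵢ ≠ 0` and all other products vanish, then `w = v / vᵢ²` is an
idempotent, and `w` together with the `eⱼ`, `j ≠ i`, is a natural basis of the algebra with the same
multiplication table as `E₄` (up to relabelling the basis).
-/

/-- Evolution algebra multiplication on ℝ³ determined by a structure matrix `A`:
`(x ∗_A y) j = ∑ i, x i * y i * A i j`. -/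
def evolMul (A : Matrix (Fin 3) (Fin 3) ℝ) (x y : Fin 3 → ℝ) : Fin 3 → ℝ :=
  fun j => ∑ i, x i * y i * A i j

/-- The evolution algebras with structure matrices `A` and `B` are isomorphic:
there is an ℝ-linear equivalence of ℝ³ intertwining the two multiplications. -/
def EvolIso (A B : Matrix (Fin 3) (Fin 3) ℝ) : Prop :=
  ∃ f : (Fin 3 → ℝ) ≃ₗ[ℝ] (Fin 3 → ℝ),
    ∀ x y, f (evolMul A x y) = evolMul B (f x) (f y)

open Matrix

theorem EvolIso.trans {A B C : Matrix (Fin 3) (Fin 3) ℝ} (hAB : EvolIso A B) (hBC : EvolIso B C) :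
    EvolIso A C := by
  obtain ⟨f, hf⟩ := hAB
  obtain ⟨g, hg⟩ := hBC
  exact ⟨f.trans g, fun x y => by simp [hf, hg]⟩

theorem evolMul_of_single (i : Fin 3) (v x y : Fin 3 → ℝ) :
    evolMul (of (Pi.single i v)) x y = (x i * y i) • v := by
  ext j
  simp [evolMul, Pi.single_apply, ite_apply]

theorem evolIso_single_single (i j : Fin 3) :
    EvolIso (of (Pi.single i (Pi.single i 1))) (of (Pi.single j (Pi.single j 1))) := by
  refine ⟨LinearEquiv.funCongrLeft ℝ ℝ (Equiv.swap i j), fun x y => ?_⟩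
  ext k
  simp [evolMul_of_single, Pi.single_apply, Equiv.swap_apply_eq_iff]

/-- Sends the idempotent `v / v i ^ 2` to `e i` and fixes `e j` for `j ≠ i`. -/
noncomputable def singleRowLinearMap (i : Fin 3) (v : Fin 3 → ℝ) : (Fin 3 → ℝ) →ₗ[ℝ] (Fin 3 → ℝ) :=
  LinearMap.id - (LinearMap.proj i).smulRight ((v i)⁻¹ • v - v i • Pi.single i 1)

theorem singleRowLinearMap_apply_self {i : Fin 3} {v : Fin 3 → ℝ} (hv : v i ≠ 0)
    (x : Fin 3 → ℝ) : singleRowLinearMap i v x i = v i * x i := by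
  simp [singleRowLinearMap, inv_mul_cancel₀ hv]
  ring

theorem singleRowLinearMap_apply_vec {i : Fin 3} {v : Fin 3 → ℝ} (hv : v i ≠ 0) :
    singleRowLinearMap i v v = (v i ^ 2) • Pi.single i 1 := by
  simp [singleRowLinearMap, smul_sub, smul_smul, mul_inv_cancel₀ hv, sq]

theorem evolIso_of_single (i : Fin 3) (v : Fin 3 → ℝ) (hv : v i ≠ 0) :
    EvolIso (of (Pi.single i v)) (of (Pi.single i (Pi.single i 1))) := by
  have hinj : Function.Injective (singleRowLinearMap i v) := by
    rw [← LinearMap.ker_eq_bot, LinearMap.ker_eq_bot']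
    intro x hx
    have hxi : x i = 0 := by
      simpa [singleRowLinearMap_apply_self hv, hv] using congrFun hx i
    simpa [singleRowLinearMap, hxi] using hx
  refine ⟨LinearEquiv.ofInjectiveEndo _ hinj, fun x y => ?_⟩
  simp only [LinearEquiv.coe_ofInjectiveEndo, evolMul_of_single, map_smul,
    singleRowLinearMap_apply_vec hv, singleRowLinearMap_apply_self hv, smul_smul]
  ring_nf

theorem smul_constRows_eq_of_single {r a b c d : ℝ} {i : Fin 3}
    (h : ![a, b, c] = Pi.single i d) :
    r • !![a, a, a; b, b, b; c, c, c] = of (Pi.single i fun _ => r * d) := by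
  have ha := congrFun h 0
  have hb := congrFun h 1
  have hc := congrFun h 2
  ext k l
  fin_cases i <;> simp at ha hb hc <;> fin_cases k <;> fin_cases l <;> simp [ha, hb, hc]

theorem stmt_general (h f g : ℝ → ℝ) (s t : ℝ)
    (hhs : h s ≠ 0) (hht : h t ≠ 0)
    (c₁ c₂ c₃ : ℝ) (hc₁ : c₁ = 1 / h s + f s) (hc₂ : c₂ = 1 / h s - g s)
    (hc₃ : c₃ = g s - f s)
    (hcond : (g s = f s ∧ f s = 1 / h s) ∨ (g s = f s ∧ f s = -(1 / h s)) ∨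
             (g s = 1 / h s ∧ -(f s) = 1 / h s)) :
    EvolIso ((h t / 2) • (!![c₁, c₁, c₁; c₂, c₂, c₂; c₃, c₃, c₃] : Matrix (Fin 3) (Fin 3) ℝ)) (!![1, 0, 0; 0, 0, 0; 0, 0, 0] : Matrix (Fin 3) (Fin 3) ℝ) := by
  obtain ⟨i, hi⟩ : ∃ i, ![c₁, c₂, c₃] = Pi.single i (2 / h s) := by
    rcases hcond with ⟨hg, hf⟩ | ⟨hg, hf⟩ | ⟨hg, hf⟩
    · exact ⟨0, by ext k; fin_cases k <;> simp [hc₁, hc₂, hc₃, hf, hg]; ring⟩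
    · exact ⟨1, by ext k; fin_cases k <;> simp [hc₁, hc₂, hc₃, hf, hg]; ring⟩
    · rw [neg_eq_iff_eq_neg] at hf
      exact ⟨2, by ext k; fin_cases k <;> simp [hc₁, hc₂, hc₃, hf, hg]; ring⟩
  have hE₄ : (!![1, 0, 0; 0, 0, 0; 0, 0, 0] : Matrix (Fin 3) (Fin 3) ℝ) =
      of (Pi.single 0 (Pi.single 0 1)) := by
    ext k l; fin_cases k <;> fin_cases l <;> rfl
  rw [smul_constRows_eq_of_single hi, hE₄]
  exact (evolIso_of_single i _ (by simp [hhs, hht])).trans (evolIso_single_single i 0)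

theorem stmt (h f g : ℝ → ℝ) (s t : ℝ) (hst0 : 0 ≤ s) (hst : s ≤ t)
    (hhs : h s ≠ 0) (hht : h t ≠ 0)
    (c₁ c₂ c₃ : ℝ) (hc₁ : c₁ = 1 / h s + f s) (hc₂ : c₂ = 1 / h s - g s)
    (hc₃ : c₃ = g s - f s)
    (hcond : (g s = f s ∧ f s = 1 / h s) ∨ (g s = f s ∧ f s = -(1 / h s)) ∨
             (g s = 1 / h s ∧ -(f s) = 1 / h s)) :
    EvolIso ((h t / 2) • (!![c₁, c₁, c₁; c₂, c₂, c₂; c₃, c₃, c₃] : Matrix (Fin 3) (Fin 3) ℝ)) (!![1, 0, 0; 0, 0, 0; 0, 0, 0] : Matrix (Fin 3) (Fin 3) ℝ) :=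
  stmt_general h f g s t hhs hht c₁ c₂ c₃ hc₁ hc₂ hc₃ hcond
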